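/- Let Y, Z be real random variables and X arbitrary, with the conditional distribution functions F_{Y|X}(·|x) continuous for a.e. x, and set U = F_{Y|X}(Y|X). For any square-integrable functions s, t of r arguments with zero means under the uniform product measure, if Y ⫫ Z | X then the statistic θ(U, V) := E[s(U_1, ..., U_r) t(V_1, ..., V_r)] computed on i.i.d. copies of the partial copula transforms (U, V) equals zero. -/

import Mathlib

/-!
Conditionally on `X = x`, `Y` and `Z` are independent with laws `κ_Y x`, `κ_Z x`, and the
probability integral transform sends each to the uniform law on `[0, 1]` because the conditional
cdfs are continuous. The conditional law of `(U, V)` is therefore `Unif ⊗ Unif` for a.e. `x`, hence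
so is its law. For i.i.d. copies, `(U₁, …, U_r)` and `(V₁, …, V_r)` are then independent with
`(U₁, …, U_r)` uniform on the cube, so `θ = E[s(U)] E[t(V)] = 0`.
-/

open MeasureTheory ProbabilityTheory Set

instance : IsProbabilityMeasure (volume.restrict (Icc (0 : ℝ) 1)) :=
  ⟨by simp⟩

theorem measure_cdf_le_of_continuous (ρ : Measure ℝ) [IsProbabilityMeasure ρ]
    (hc : Continuous (cdf ρ)) {a : ℝ} (ha : 0 ≤ a) (ha1 : a < 1) :
    ρ {y | cdf ρ y ≤ a} = ENNReal.ofReal a := by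
  set S := {y | cdf ρ y ≤ a}
  have hbdd : BddAbove S := by
    obtain ⟨M, hM⟩ := ((tendsto_cdf_atTop ρ).eventually_const_lt ha1).exists_forall_of_atTop
    exact ⟨M, fun y hy => not_lt.1 fun hMy => (hM y hMy.le).not_ge hy⟩
  rcases S.eq_empty_or_nonempty with hS | hS
  · have ha0 : a = 0 := by
      refine le_antisymm (not_lt.1 fun hpos => ?_) ha
      obtain ⟨y, hy⟩ := ((tendsto_cdf_atBot ρ).eventually_lt_const hpos).exists
      exact eq_empty_iff_forall_notMem.1 hS y hy.le
    simp [hS, ha0]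
  · set c := sSup S
    have hcS : c ∈ S := (isClosed_le hc continuous_const).csSup_mem hS hbdd
    have hSc : S = Iic c :=
      Subset.antisymm (fun y hy => le_csSup hbdd hy) fun y hy => (monotone_cdf ρ hy).trans hcS
    -- right of `c` the cdf exceeds `a`, so by continuity `cdf ρ c ≥ a`
    have hca : cdf ρ c = a := by
      refine le_antisymm hcS <| ge_of_tendsto
        ((hc.tendsto c).mono_left (nhdsWithin_le_nhds (s := Ioi c))) ?_
      exact eventually_nhdsWithin_of_forall fun y hy =>
        le_of_lt (not_le.1 fun h => (not_le.2 hy) (le_csSup hbdd h))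
    rw [hSc, ← ofReal_cdf, hca]

theorem map_cdf_eq_uniform (ρ : Measure ℝ) [IsProbabilityMeasure ρ] (hc : Continuous (cdf ρ)) :
    ρ.map (cdf ρ) = volume.restrict (Icc 0 1) := by
  refine Measure.ext_of_Iic _ _ fun a => ?_
  have hIcc : volume.restrict (Icc (0 : ℝ) 1) (Iic a) = ENNReal.ofReal (min a 1) := by
    have : Iic a ∩ Icc 0 1 = Icc 0 (min a 1) := by
      ext; simp only [mem_inter_iff, mem_Iic, mem_Icc, le_min_iff]; tauto
    rw [Measure.restrict_apply measurableSet_Iic, this, Real.volume_Icc, sub_zero]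
  rw [Measure.map_apply (monotone_cdf ρ).measurable measurableSet_Iic, hIcc]
  rcases lt_or_ge a 0 with ha | ha
  · have : cdf ρ ⁻¹' Iic a = ∅ := eq_empty_of_forall_notMem fun y hy =>
      (ha.trans_le (cdf_nonneg ρ y)).not_ge hy
    simp [this, ENNReal.ofReal_of_nonpos (min_le_of_left_le ha.le)]
  rcases lt_or_ge a 1 with ha1 | ha1
  · rw [min_eq_left ha1.le]
    exact measure_cdf_le_of_continuous ρ hc ha ha1
  · have : cdf ρ ⁻¹' Iic a = univ := eq_univ_of_forall fun y => (cdf_le_one ρ y).trans ha1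
    simp [this, min_eq_right ha1]

@[fun_prop]
theorem Measurable.cdf_kernel {α E : Type*} [MeasurableSpace α] [MeasurableSpace E]
    (κ : Kernel E ℝ) [IsMarkovKernel κ] {f : α → E} {g : α → ℝ} (hf : Measurable f)
    (hg : Measurable g) : Measurable fun a => cdf (κ (f a)) (g a) := by
  -- `κ x (Iic y)` is the measure of the `(x, y)`-section of `{((x, y), w) | w ≤ y}`
  have := Kernel.measurable_kernel_prodMk_left (κ := Kernel.prodMkRight ℝ κ)
    (measurableSet_le measurable_snd (measurable_snd.comp measurable_fst))
  simp_rw [cdf_eq_real, measureReal_def]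
  exact this.ennreal_toReal.comp (hf.prodMk hg)

theorem map_comp_id_prod_prod_eq_prod {E α β γ δ : Type*} [MeasurableSpace E] [MeasurableSpace α]
    [MeasurableSpace β] [MeasurableSpace γ] [MeasurableSpace δ]
    (ν : Measure E) [IsProbabilityMeasure ν] (κ : Kernel E α) (η : Kernel E β)
    [IsMarkovKernel κ] [IsMarkovKernel η] {f : E → α → γ} {g : E → β → δ}
    (hf : Measurable (Function.uncurry f)) (hg : Measurable (Function.uncurry g))
    {ρ₁ : Measure γ} {ρ₂ : Measure δ}
    (hκ : ∀ᵐ x ∂ν, (κ x).map (f x) = ρ₁) (hη : ∀ᵐ x ∂ν, (η x).map (g x) = ρ₂) :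
    ((Kernel.id ×ₖ (κ ×ₖ η)) ∘ₘ ν).map (fun p => (f p.1 p.2.1, g p.1 p.2.2)) = ρ₁.prod ρ₂ := by
  have hφ : Measurable fun p : E × α × β => (f p.1 p.2.1, g p.1 p.2.2) :=
    (hf.comp (measurable_fst.prodMk measurable_snd.fst)).prodMk
      (hg.comp (measurable_fst.prodMk measurable_snd.snd))
  rw [Measure.map_comp _ _ hφ, Measure.comp_congr (η := Kernel.const E (ρ₁.prod ρ₂)),
    Measure.const_comp, measure_univ, one_smul]
  filter_upwards [hκ, hη] with x hκx hηx
  rw [Kernel.map_apply _ hφ, Kernel.const_apply, Kernel.prod_apply, Kernel.id_apply,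
    Kernel.prod_apply, Measure.dirac_prod, Measure.map_map hφ measurable_prodMk_left, ← hκx, ← hηx,
    Measure.map_prod_map _ _ hf.of_uncurry_left hg.of_uncurry_left]
  rfl

theorem map_cdf_condDistrib_eq_uniform_prod {Ω E : Type*} [MeasurableSpace Ω]
    [StandardBorelSpace Ω] [MeasurableSpace E] (μ : Measure Ω) [IsProbabilityMeasure μ]
    {X : Ω → E} {Y Z : Ω → ℝ} (hX : Measurable X) (hY : Measurable Y) (hZ : Measurable Z)
    (hcontY : ∀ᵐ x ∂(μ.map X), Continuous (cdf (condDistrib Y X μ x)))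
    (hcontZ : ∀ᵐ x ∂(μ.map X), Continuous (cdf (condDistrib Z X μ x)))
    (hCI : Y ⟂ᵢ[X, hX; μ] Z) :
    μ.map (fun ω => (cdf (condDistrib Y X μ (X ω)) (Y ω), cdf (condDistrib Z X μ (X ω)) (Z ω)))
      = (volume.restrict (Icc 0 1)).prod (volume.restrict (Icc 0 1)) := by
  rw [condIndepFun_iff_map_prod_eq_prod_condDistrib_prod_condDistrib hY hZ hX] at hCI
  have := Measure.isProbabilityMeasure_map (μ := μ) hX.aemeasurable
  rw [← map_comp_id_prod_prod_eq_prod _ _ _ (by fun_prop) (by fun_prop)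
      (hcontY.mono fun x => map_cdf_eq_uniform _) (hcontZ.mono fun x => map_cdf_eq_uniform _),
    ← hCI, Measure.map_map (by fun_prop) (by fun_prop)]
  rfl

theorem map_prod_pi_of_iIndepFun {Ω ι α β : Type*} [MeasurableSpace Ω] [MeasurableSpace α]
    [MeasurableSpace β] [Fintype ι] (μ : Measure Ω) [IsProbabilityMeasure μ]
    {U : ι → Ω → α} {V : ι → Ω → β} (hU : ∀ i, Measurable (U i)) (hV : ∀ i, Measurable (V i))
    (hind : iIndepFun (fun i ω => (U i ω, V i ω)) μ) {ρ₁ : Measure α} {ρ₂ : Measure β}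
    [SigmaFinite ρ₁] [SigmaFinite ρ₂] (hlaw : ∀ i, μ.map (fun ω => (U i ω, V i ω)) = ρ₁.prod ρ₂) :
    μ.map (fun ω => ((fun i => U i ω), (fun i => V i ω)))
      = (Measure.pi fun _ : ι => ρ₁).prod (Measure.pi fun _ : ι => ρ₂) := by
  have hUV (i : ι) : Measurable fun ω => (U i ω, V i ω) := (hU i).prodMk (hV i)
  rw [show (fun ω => ((fun i => U i ω), (fun i => V i ω)))
      = MeasurableEquiv.arrowProdEquivProdArrow α β ι ∘ (fun ω i => (U i ω, V i ω)) from rfl,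
    ← Measure.map_map (MeasurableEquiv.measurable _) (measurable_pi_lambda _ hUV),
    (iIndepFun_iff_map_fun_eq_pi_map fun i => (hUV i).aemeasurable).1 hind]
  simp_rw [hlaw]
  exact (measurePreserving_arrowProdEquivProdArrow α β ι _ _).map_eq

theorem partial_copula_stmt17_general
    {Ω E Ω' : Type*} [MeasurableSpace Ω] [StandardBorelSpace Ω] [MeasurableSpace E]
    [MeasurableSpace Ω']
    (μ : Measure Ω) [IsProbabilityMeasure μ]
    (μ' : Measure Ω') [IsProbabilityMeasure μ']
    (X : Ω → E) (Y Z : Ω → ℝ)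
    (hX : Measurable X) (hY : Measurable Y) (hZ : Measurable Z)
    (F G : E → ℝ → ℝ)
    (hF : ∀ x y, F x y = ((condDistrib Y X μ) x (Set.Iic y)).toReal)
    (hG : ∀ x z, G x z = ((condDistrib Z X μ) x (Set.Iic z)).toReal)
    (hcontF : ∀ᵐ x ∂(μ.map X), Continuous (F x))
    (hcontG : ∀ᵐ x ∂(μ.map X), Continuous (G x))
    (hCI : CondIndepFun (MeasurableSpace.comap X inferInstance) hX.comap_le Y Z μ)
    (r : ℕ) (Us Vs : Fin r → Ω' → ℝ)
    (hUs : ∀ i, Measurable (Us i)) (hVs : ∀ i, Measurable (Vs i))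
    (hiid : iIndepFun (fun i ω => (Us i ω, Vs i ω)) μ')
    (hident : ∀ i, μ'.map (fun ω => (Us i ω, Vs i ω)) =
        μ.map (fun ω => (F (X ω) (Y ω), G (X ω) (Z ω))))
    (s t : (Fin r → ℝ) → ℝ) (hs : Measurable s) (ht : Measurable t)
    (hs0 : ∫ u, s u ∂(Measure.pi fun _ : Fin r => volume.restrict (Set.Icc 0 1)) = 0) :
    ∫ ω, s (fun i => Us i ω) * t (fun i => Vs i ω) ∂μ' = 0 := by
  obtain rfl : F = fun x y => cdf (condDistrib Y X μ x) y := by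
    ext x y; rw [hF, cdf_eq_real, measureReal_def]
  obtain rfl : G = fun x z => cdf (condDistrib Z X μ x) z := by
    ext x z; rw [hG, cdf_eq_real, measureReal_def]
  have hlaw := map_prod_pi_of_iIndepFun μ' hUs hVs hiid fun i =>
    (hident i).trans (map_cdf_condDistrib_eq_uniform_prod μ hX hY hZ hcontF hcontG hCI)
  calc ∫ ω, s (fun i => Us i ω) * t (fun i => Vs i ω) ∂μ'
      = ∫ p, s p.1 * t p.2 ∂μ'.map (fun ω => ((fun i => Us i ω), (fun i => Vs i ω))) :=
        (integral_map
          ((measurable_pi_lambda _ hUs).prodMk (measurable_pi_lambda _ hVs)).aemeasurable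
          ((hs.comp measurable_fst).mul (ht.comp measurable_snd)).aestronglyMeasurable).symm
    _ = 0 := by rw [hlaw, integral_prod_mul, hs0, zero_mul]

/-- Combining the partial copula property with the vanishing of centered association measures:
if `Y ⫫ Z | X` and `(U_i, V_i)`, `i = 1,…,r`, are i.i.d. copies of the partial copula
transforms `(U, V) = (F_{Y|X}(Y|X), G_{Z|X}(Z|X))`, then for square-integrable `s, t` with zero
mean under the uniform product measure, `θ = E[s(U₁,…,U_r) t(V₁,…,V_r)] = 0`. -/
theorem partial_copula_stmt17
    {Ω E Ω' : Type*} [MeasurableSpace Ω] [StandardBorelSpace Ω] [MeasurableSpace E]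
    [MeasurableSpace Ω']
    (μ : Measure Ω) [IsProbabilityMeasure μ]
    (μ' : Measure Ω') [IsProbabilityMeasure μ']
    (X : Ω → E) (Y Z : Ω → ℝ)
    (hX : Measurable X) (hY : Measurable Y) (hZ : Measurable Z)
    (F G : E → ℝ → ℝ)
    (hF : ∀ x y, F x y = ((condDistrib Y X μ) x (Set.Iic y)).toReal)
    (hG : ∀ x z, G x z = ((condDistrib Z X μ) x (Set.Iic z)).toReal)
    (hcontF : ∀ᵐ x ∂(μ.map X), Continuous (F x))
    (hcontG : ∀ᵐ x ∂(μ.map X), Continuous (G x))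
    (hCI : CondIndepFun (MeasurableSpace.comap X inferInstance) hX.comap_le Y Z μ)
    (r : ℕ) (Us Vs : Fin r → Ω' → ℝ)
    (hUs : ∀ i, Measurable (Us i)) (hVs : ∀ i, Measurable (Vs i))
    (hiid : iIndepFun (fun i ω => (Us i ω, Vs i ω)) μ')
    (hident : ∀ i, μ'.map (fun ω => (Us i ω, Vs i ω)) =
        μ.map (fun ω => (F (X ω) (Y ω), G (X ω) (Z ω))))
    (s t : (Fin r → ℝ) → ℝ) (hs : Measurable s) (ht : Measurable t)
    (hs2 : MemLp s 2 (Measure.pi fun _ : Fin r => volume.restrict (Set.Icc 0 1)))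
    (ht2 : MemLp t 2 (Measure.pi fun _ : Fin r => volume.restrict (Set.Icc 0 1)))
    (hs0 : ∫ u, s u ∂(Measure.pi fun _ : Fin r => volume.restrict (Set.Icc 0 1)) = 0)
    (ht0 : ∫ v, t v ∂(Measure.pi fun _ : Fin r => volume.restrict (Set.Icc 0 1)) = 0) :
    ∫ ω, s (fun i => Us i ω) * t (fun i => Vs i ω) ∂μ' = 0 :=
  partial_copula_stmt17_general μ μ' X Y Z hX hY hZ F G hF hG hcontF hcontG hCI r Us Vs hUs hVs hiid
    hident s t hs ht hs0
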